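/- arXiv:2412.19014 — 3 statements merged into one kernel-verified Lean document; each statement's English description precedes it below -/
import Mathlib

section
/- Localization theorem: let (X, ·, ℂ) be a stratified L-convex group with identity e. Then for every x ∈ X, nonzero coprime a ∈ L, and A : X → L: A belongs to the remote-neighborhood system R_{x_a} if and only if ⊤_{x⁻¹} ⊙ A belongs to R_{e_a}, if and only if A ⊙ ⊤_{x⁻¹} belongs to R_{e_a}. -/
/-! Because `ℂ`-sets on `X × X` are products, the convexity-preservation of multiplication gives
`C (x * u) = C₁ x ⊓ C₂ u` for `C ∈ ℂ`, a meet of a constant (in `ℂ` by stratification) and a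
member of `ℂ`; so the translations `L_x`, `R_x` preserve `ℂ`, as do their inverses `L_{x⁻¹}`,
`R_{x⁻¹}`. Remote neighborhoods pull back along `ℂ`-preserving maps, hence correspond exactly
along these bijections, and `⊤_{x⁻¹} ⊙ A = A ∘ L_x`, `A ⊙ ⊤_{x⁻¹} = A ∘ R_x`. -/

open scoped Classical

variable {L X : Type*}

def IsLConvex [CompleteLattice L] {X : Type*} (𝒞 : Set (X → L)) : Prop :=
  (fun _ => (⊤ : L)) ∈ 𝒞 ∧ (fun _ => (⊥ : L)) ∈ 𝒞 ∧
  (∀ S : Set (X → L), S ⊆ 𝒞 → sInf S ∈ 𝒞) ∧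
  (∀ S : Set (X → L), S ⊆ 𝒞 → DirectedOn (· ≤ ·) S → sSup S ∈ 𝒞)

def IsStratified [CompleteLattice L] {X : Type*} (𝒞 : Set (X → L)) : Prop :=
  ∀ a : L, (fun _ => a) ∈ 𝒞

def fprod [CompleteLattice L] {X Y : Type*} (A : X → L) (B : Y → L) : X × Y → L :=
  fun p => A p.1 ⊓ B p.2

def prodStruct [CompleteLattice L] {X Y : Type*}
    (𝒞 : Set (X → L)) (𝒟 : Set (Y → L)) : Set (X × Y → L) :=
  {F | ∃ C ∈ 𝒞, ∃ D ∈ 𝒟, F = fprod C D}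

def LCP [CompleteLattice L] {X Y : Type*} (f : X → Y)
    (𝒞 : Set (X → L)) (𝔾 : Set (Y → L)) : Prop :=
  ∀ A ∈ 𝔾, (A ∘ f) ∈ 𝒞

def IsLConvexGroup [CompleteLattice L] [Group X] (𝒞 : Set (X → L)) : Prop :=
  LCP (fun p : X × X => p.1 * p.2) (prodStruct 𝒞 𝒞) 𝒞 ∧ LCP (fun x : X => x⁻¹) 𝒞 𝒞

noncomputable def odot [CompleteLattice L] [Mul X] (A B : X → L) : X → L :=
  fun u => ⨆ (y : X) (z : X) (_ : y * z = u), A y ⊓ B z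

noncomputable def chi [CompleteLattice L] (x : X) : X → L :=
  fun u => if u = x then ⊤ else ⊥

noncomputable def fpoint [CompleteLattice L] (x : X) (a : L) : X → L :=
  fun u => if u = x then a else ⊥

def RN [CompleteLattice L] {X : Type*} (𝒞 : Set (X → L)) (c : L → L) (x : X) (a : L) :
    Set (X → L) :=
  {A | ∃ C ∈ 𝒞, fpoint x a ≤ (fun u => c (C u)) ∧ (fun u => c (C u)) ≤ (fun u => c (A u))}

def IsCoprimeElt [CompleteLattice L] (a : L) : Prop :=
  a ≠ ⊥ ∧ ∀ b c : L, a ≤ b ⊔ c → a ≤ b ∨ a ≤ c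

section
variable [CompleteLattice L]

theorem fpoint_le_iff {x : X} {a : L} {f : X → L} : fpoint x a ≤ f ↔ a ≤ f x := by
  refine ⟨fun h => by simpa [fpoint] using h x, fun h u => ?_⟩
  by_cases hu : u = x
  · simpa [fpoint, hu] using h
  · simp [fpoint, hu]

theorem comp_mem_RN {Y : Type*} {𝒞 : Set (X → L)} {𝒟 : Set (Y → L)} {f : X → Y}
    (hf : LCP f 𝒞 𝒟) {c : L → L} {y : X} {a : L} {A : Y → L}
    (hA : A ∈ RN 𝒟 c (f y) a) :
    A ∘ f ∈ RN 𝒞 c y a := by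
  obtain ⟨C, hC, hpt, hle⟩ := hA
  have ha : a ≤ c (C (f y)) := (fpoint_le_iff (f := fun u => c (C u))).1 hpt
  exact ⟨C ∘ f, hf C hC, fpoint_le_iff.2 ha, fun u => hle (f u)⟩

theorem comp_equiv_mem_RN_iff {Y : Type*} {𝒞 : Set (X → L)} {𝒟 : Set (Y → L)} (e : X ≃ Y)
    (he : LCP e 𝒞 𝒟) (he_symm : LCP e.symm 𝒟 𝒞) {c : L → L} {y : X} {a : L} {A : Y → L} :
    A ∘ e ∈ RN 𝒞 c y a ↔ A ∈ RN 𝒟 c (e y) a := by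
  refine ⟨fun hA => ?_, comp_mem_RN he⟩
  have hA' := comp_mem_RN he_symm (y := e y) (by rwa [e.symm_apply_apply])
  rwa [Function.comp_assoc, e.self_comp_symm, Function.comp_id] at hA'

variable [Group X]

theorem odot_chi_inv_left (x : X) (A : X → L) :
    odot (chi x⁻¹) A = A ∘ (x * ·) := by
  funext u
  have h : ∀ y z : X, y * z = u ↔ z = y⁻¹ * u := fun y z => eq_inv_mul_iff_mul_eq.symm
  simp only [odot, chi, h, iSup_iSup_eq_left]
  refine le_antisymm (iSup_le fun y => ?_) (le_iSup_of_le x⁻¹ (by simp))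
  split_ifs with hy <;> simp [hy]

theorem odot_chi_inv_right (x : X) (A : X → L) :
    odot A (chi x⁻¹) = A ∘ (· * x) := by
  funext u
  have h : ∀ y z : X, y * z = u ↔ y = u * z⁻¹ := fun y z => eq_mul_inv_iff_mul_eq.symm
  simp only [odot, chi, h, iSup_comm (ι := X), iSup_iSup_eq_left]
  refine le_antisymm (iSup_le fun z => ?_) (le_iSup_of_le x⁻¹ (by simp))
  split_ifs with hz <;> simp [hz]

variable {𝒞 : Set (X → L)}

theorem lcp_mul_left (h : IsLConvex 𝒞) (hs : IsStratified 𝒞)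
    (hmul : LCP (fun p : X × X => p.1 * p.2) (prodStruct 𝒞 𝒞) 𝒞) (x : X) :
    LCP (x * ·) 𝒞 𝒞 := by
  intro C hC
  obtain ⟨C₁, -, C₂, hC₂, hprod⟩ := hmul C hC
  have hC : C ∘ (x * ·) = sInf {fun _ => C₁ x, C₂} := by
    funext u
    rw [sInf_pair]
    exact congrFun hprod (x, u)
  rw [hC]
  exact h.2.2.1 _ (Set.insert_subset_iff.2 ⟨hs _, Set.singleton_subset_iff.2 hC₂⟩)

theorem lcp_mul_right (h : IsLConvex 𝒞) (hs : IsStratified 𝒞)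
    (hmul : LCP (fun p : X × X => p.1 * p.2) (prodStruct 𝒞 𝒞) 𝒞) (x : X) :
    LCP (· * x) 𝒞 𝒞 := by
  intro C hC
  obtain ⟨C₁, hC₁, C₂, -, hprod⟩ := hmul C hC
  have hC : C ∘ (· * x) = sInf {C₁, fun _ => C₂ x} := by
    funext u
    rw [sInf_pair]
    exact congrFun hprod (u, x)
  rw [hC]
  exact h.2.2.1 _ (Set.insert_subset_iff.2 ⟨hC₁, Set.singleton_subset_iff.2 (hs _)⟩)

theorem mem_RN_iff_comp_mul_left (h : IsLConvex 𝒞) (hs : IsStratified 𝒞)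
    (hmul : LCP (fun p : X × X => p.1 * p.2) (prodStruct 𝒞 𝒞) 𝒞)
    {c : L → L} {x : X} {a : L} {A : X → L} :
    A ∈ RN 𝒞 c x a ↔ A ∘ (x * ·) ∈ RN 𝒞 c 1 a := by
  simpa using (comp_equiv_mem_RN_iff (Equiv.mulLeft x) (lcp_mul_left h hs hmul x)
    (by simpa using lcp_mul_left h hs hmul x⁻¹) (y := 1)).symm

theorem mem_RN_iff_comp_mul_right (h : IsLConvex 𝒞) (hs : IsStratified 𝒞)
    (hmul : LCP (fun p : X × X => p.1 * p.2) (prodStruct 𝒞 𝒞) 𝒞)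
    {c : L → L} {x : X} {a : L} {A : X → L} :
    A ∈ RN 𝒞 c x a ↔ A ∘ (· * x) ∈ RN 𝒞 c 1 a := by
  simpa using (comp_equiv_mem_RN_iff (Equiv.mulRight x) (lcp_mul_right h hs hmul x)
    (by simpa using lcp_mul_right h hs hmul x⁻¹) (y := 1)).symm

end

theorem localization_general [CompletelyDistribLattice L] [Group X]
    (c : L → L)
    (𝒞 : Set (X → L)) (h : IsLConvex 𝒞) (hs : IsStratified 𝒞)
    (hg : IsLConvexGroup 𝒞) (x : X) (a : L) (A : X → L) :
    (A ∈ RN 𝒞 c x a ↔ odot (chi x⁻¹) A ∈ RN 𝒞 c (1 : X) a) ∧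
    (A ∈ RN 𝒞 c x a ↔ odot A (chi x⁻¹) ∈ RN 𝒞 c (1 : X) a) := by
  rw [odot_chi_inv_left, odot_chi_inv_right]
  exact ⟨mem_RN_iff_comp_mul_left h hs hg.1, mem_RN_iff_comp_mul_right h hs hg.1⟩

theorem localization [CompletelyDistribLattice L] [Group X]
    (c : L → L) (hcA : Antitone c) (hci : Function.Involutive c)
    (𝒞 : Set (X → L)) (h : IsLConvex 𝒞) (hs : IsStratified 𝒞)
    (hg : IsLConvexGroup 𝒞) (x : X) (a : L) (ha : IsCoprimeElt a) (A : X → L) :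
    (A ∈ RN 𝒞 c x a ↔ odot (chi x⁻¹) A ∈ RN 𝒞 c (1 : X) a) ∧
    (A ∈ RN 𝒞 c x a ↔ odot A (chi x⁻¹) ∈ RN 𝒞 c (1 : X) a) :=
  localization_general c 𝒞 h hs hg x a A
end

section
/- Let (X, ·, ℂ) be a stratified L-convex group, N a normal subgroup of X, and q : X → X/N the quotient homomorphism. Then for every A : X → L, q←(q→(A)) = ⨆_{z ∈ N} (A ∘ R_z), where R_z(x) = xz; consequently q←((q→(A))') = ⨅_{z ∈ N} (A' ∘ R_z), and if A' ∈ ℂ then q←((q→(A))') ∈ ℂ. -/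
variable {L X : Type*}

noncomputable def fimage [CompleteLattice L] {X Y : Type*} (f : X → Y) (A : X → L) : Y → L :=
  fun y => ⨆ (x : X) (_ : f x = y), A x

def fpre [CompleteLattice L] {X Y : Type*} (f : X → Y) (B : Y → L) : X → L := B ∘ f

open QuotientGroup

theorem Antitone.map_iSup_of_involutive [CompleteLattice L] {c : L → L} (hc : Antitone c)
    (hci : Function.Involutive c) {ι : Sort*} (f : ι → L) :
    c (⨆ i, f i) = ⨅ i, c (f i) := by
  refine le_antisymm (le_iInf fun i => hc (le_iSup f i)) ?_
  have h : ⨆ i, f i ≤ c (⨅ i, c (f i)) := iSup_le fun i => hci (f i) ▸ hc (iInf_le _ i)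
  simpa only [hci _] using hc h

theorem fpre_mk_fimage_mk [CompleteLattice L] [Group X] (N : Subgroup X) (A : X → L) :
    fpre (mk : X → X ⧸ N) (fimage mk A) = fun x => ⨆ z ∈ (N : Set X), A (x * z) := by
  funext x
  refine le_antisymm (iSup₂_le fun y hy => ?_) (iSup₂_le fun z hz => ?_)
  · have hz : x⁻¹ * y ∈ N := QuotientGroup.eq.1 hy.symm
    simpa only [mul_inv_cancel_left] using
      le_iSup₂ (f := fun z (_ : z ∈ (N : Set X)) => A (x * z)) _ hz
  · have hq : (mk (x * z) : X ⧸ N) = mk x := by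
      rw [QuotientGroup.eq, mul_inv_rev, inv_mul_cancel_right]
      exact N.inv_mem hz
    exact le_iSup₂ (f := fun y (_ : (mk y : X ⧸ N) = mk x) => A y) (x * z) hq

theorem IsLConvex.iInf_mem [CompleteLattice L] {𝒞 : Set (X → L)} (h : IsLConvex 𝒞)
    {ι : Sort*} {f : ι → X → L} (hf : ∀ i, f i ∈ 𝒞) : ⨅ i, f i ∈ 𝒞 :=
  h.2.2.1 _ (Set.range_subset_iff.2 hf)

theorem IsLConvex.inf_mem [CompleteLattice L] {𝒞 : Set (X → L)} (h : IsLConvex 𝒞)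
    {B C : X → L} (hB : B ∈ 𝒞) (hC : C ∈ 𝒞) : B ⊓ C ∈ 𝒞 := by
  rw [← sInf_pair]
  exact h.2.2.1 _ (Set.insert_subset hB (Set.singleton_subset_iff.2 hC))

/-- `B ∘ mul` is a rectangle `C × D`, so `B ∘ R_z = C ⊓ (D z)` is an infimum with a constant. -/
theorem IsLConvexGroup.comp_mul_right_mem [CompleteLattice L] [Group X] {𝒞 : Set (X → L)}
    (h : IsLConvex 𝒞) (hs : IsStratified 𝒞) (hg : IsLConvexGroup 𝒞) {B : X → L} (hB : B ∈ 𝒞)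
    (z : X) : (fun x => B (x * z)) ∈ 𝒞 := by
  obtain ⟨C, hC, D, -, hCD⟩ := hg.1 B hB
  have hBz : (fun x => B (x * z)) = C ⊓ fun _ => D z := funext fun x => congrFun hCD (x, z)
  rw [hBz]
  exact h.inf_mem hC (hs (D z))

theorem quotient_preimage_image_general [CompletelyDistribLattice L] [Group X]
    (N : Subgroup X)
    (𝒞 : Set (X → L)) (h : IsLConvex 𝒞) (hs : IsStratified 𝒞)
    (hg : IsLConvexGroup 𝒞)
    (c : L → L) (hcA : Antitone c) (hci : Function.Involutive c)
    (A : X → L) :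
    (fpre (QuotientGroup.mk : X → X ⧸ N) (fimage QuotientGroup.mk A) =
      fun x => ⨆ z ∈ (N : Set X), A (x * z)) ∧
    (fpre (QuotientGroup.mk : X → X ⧸ N)
        (fun y => c (fimage (QuotientGroup.mk : X → X ⧸ N) A y)) =
      fun x => ⨅ z ∈ (N : Set X), c (A (x * z))) ∧
    ((fun u => c (A u)) ∈ 𝒞 →
      fpre (QuotientGroup.mk : X → X ⧸ N)
        (fun y => c (fimage (QuotientGroup.mk : X → X ⧸ N) A y)) ∈ 𝒞) := by
  have hpre := fpre_mk_fimage_mk N A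
  have hcompl : fpre (mk : X → X ⧸ N) (fun y => c (fimage mk A y)) =
      fun x => ⨅ z ∈ (N : Set X), c (A (x * z)) := by
    funext x
    have hx : fimage mk A (mk x : X ⧸ N) = ⨆ z ∈ (N : Set X), A (x * z) := congrFun hpre x
    simp only [fpre, Function.comp_apply, hx, hcA.map_iSup_of_involutive hci]
  refine ⟨hpre, hcompl, fun hA => ?_⟩
  have hinf : (⨅ z ∈ (N : Set X), fun x => c (A (x * z))) ∈ 𝒞 :=
    h.iInf_mem fun z => h.iInf_mem fun _ => hg.comp_mul_right_mem h hs hA z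
  rw [hcompl]
  convert hinf using 1
  funext x
  simp only [iInf_apply]

theorem quotient_preimage_image [CompletelyDistribLattice L] [Group X]
    (N : Subgroup X) [N.Normal]
    (𝒞 : Set (X → L)) (h : IsLConvex 𝒞) (hs : IsStratified 𝒞)
    (hg : IsLConvexGroup 𝒞)
    (c : L → L) (hcA : Antitone c) (hci : Function.Involutive c)
    (A : X → L) :
    (fpre (QuotientGroup.mk : X → X ⧸ N) (fimage QuotientGroup.mk A) =
      fun x => ⨆ z ∈ (N : Set X), A (x * z)) ∧
    (fpre (QuotientGroup.mk : X → X ⧸ N)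
        (fun y => c (fimage (QuotientGroup.mk : X → X ⧸ N) A y)) =
      fun x => ⨅ z ∈ (N : Set X), c (A (x * z))) ∧
    ((fun u => c (A u)) ∈ 𝒞 →
      fpre (QuotientGroup.mk : X → X ⧸ N)
        (fun y => c (fimage (QuotientGroup.mk : X → X ⧸ N) A y)) ∈ 𝒞) :=
  quotient_preimage_image_general N 𝒞 h hs hg c hcA hci A
end

section
/- Let (X, 𝒞) be a (crisp) convex space and define ω_L(𝒞) to be the family of all directed suprema of L-fuzzy sets of the form â ⊓ χ_C with a ∈ L and C ∈ 𝒞 (where χ_C is the {⊥,⊤}-valued characteristic map of C). Then ω_L(𝒞) is a stratified L-convex structure on X. -/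
/-!
A map `A : X → L` lies in `ω_L(𝒞)` iff the basic maps `â ⊓ χ_C` below it form a directed family
with supremum `A`. For nonzero basic maps `â ⊓ χ_C, b̂ ⊓ χ_D ≤ A` the canonical upper bound is
`(a ⊔ b)^ ⊓ χ_{hull(C ∪ D)}`, so directedness is a condition that passes to infima; and by
complete distributivity an infimum of suprema of basic maps is a supremum of infima of basic maps,
which are basic again.

The real work is closure under a directed supremum `B`. Given `c, d` totally below `a, b`, each
point of `C ∪ D` lies in some `K ∈ 𝒞` with `(c ⊔ d)^ ⊓ χ_K` below a member of the family; these
`K` form a directed family whose union is convex, hence contains `hull(C ∪ D)`. Since every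
element of a completely distributive lattice is the supremum of the elements totally below it,
letting `c, d` vary gives `(a ⊔ b)^ ⊓ χ_{hull(C ∪ D)} ≤ B`.
-/

open scoped Classical

variable {L X : Type*}

def IsConvex {X : Type*} (𝒞 : Set (Set X)) : Prop :=
  ∅ ∈ 𝒞 ∧ Set.univ ∈ 𝒞 ∧
  (∀ S : Set (Set X), S ⊆ 𝒞 → ⋂₀ S ∈ 𝒞) ∧
  (∀ S : Set (Set X), S ⊆ 𝒞 → DirectedOn (· ⊆ ·) S → ⋃₀ S ∈ 𝒞)

noncomputable def chiSet [CompleteLattice L] {X : Type*} (C : Set X) : X → L :=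
  fun x => if x ∈ C then ⊤ else ⊥

def omegaBase (L : Type*) [CompleteLattice L] {X : Type*} (𝒞 : Set (Set X)) :
    Set (X → L) :=
  {A | ∃ a : L, ∃ C ∈ 𝒞, A = fun x => a ⊓ chiSet C x}

/-- `ω_L(𝒞)`: all directed suprema of basic elements `â ⊓ χ_C`. -/
def omegaL (L : Type*) [CompleteLattice L] {X : Type*} (𝒞 : Set (Set X)) :
    Set (X → L) :=
  {A | ∃ S ⊆ omegaBase L 𝒞, DirectedOn (· ≤ ·) S ∧ A = sSup S}

open Set

section TotallyBelow

variable [CompleteLattice L]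

def TotallyBelow (a b : L) : Prop := ∀ S : Set L, b ≤ sSup S → ∃ s ∈ S, a ≤ s

theorem TotallyBelow.mono_left {a a' b : L} (h : TotallyBelow a b) (h' : a' ≤ a) :
    TotallyBelow a' b :=
  fun S hS => let ⟨s, hs, has⟩ := h S hS; ⟨s, hs, h'.trans has⟩

theorem TotallyBelow.mono_right {a b b' : L} (h : TotallyBelow a b) (h' : b ≤ b') :
    TotallyBelow a b' :=
  fun S hS => h S (h'.trans hS)

theorem DirectedOn.exists_le_apply_of_totallyBelow {S : Set (X → L)}
    (hS : DirectedOn (· ≤ ·) S) {c d : L} {x y : X} (hc : TotallyBelow c (sSup S x))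
    (hd : TotallyBelow d (sSup S y)) : ∃ A ∈ S, c ≤ A x ∧ d ≤ A y := by
  obtain ⟨_, ⟨A₁, hA₁, rfl⟩, hcA₁⟩ := hc ((· x) '' S) (by rw [sSup_apply, sSup_image'])
  obtain ⟨_, ⟨A₂, hA₂, rfl⟩, hdA₂⟩ := hd ((· y) '' S) (by rw [sSup_apply, sSup_image'])
  obtain ⟨A, hA, hA₁A, hA₂A⟩ := hS A₁ hA₁ A₂ hA₂
  exact ⟨A, hA, hcA₁.trans (hA₁A x), hdA₂.trans (hA₂A y)⟩

end TotallyBelow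

section CompletelyDistrib

variable [CompletelyDistribLattice L]

theorem le_sSup_setOf_totallyBelow (b : L) : b ≤ sSup {c | TotallyBelow c b} :=
  calc b ≤ ⨅ S : {S : Set L // b ≤ sSup S}, ⨆ s : S.1, (s : L) :=
        le_iInf fun S => S.2.trans_eq (sSup_eq_iSup' S.1)
    _ = ⨆ g : ∀ S : {S : Set L // b ≤ sSup S}, S.1, ⨅ S, (g S : L) := iInf_iSup_eq
    _ ≤ sSup {c | TotallyBelow c b} :=
        iSup_le fun g => le_sSup fun T hT => ⟨g ⟨T, hT⟩, (g ⟨T, hT⟩).2, iInf_le _ _⟩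

theorem le_of_forall_totallyBelow_le {a z : L} (H : ∀ c, TotallyBelow c a → c ≤ z) : a ≤ z :=
  (le_sSup_setOf_totallyBelow a).trans (sSup_le H)

theorem TotallyBelow.exists_interpolate {a b : L} (h : TotallyBelow a b) :
    ∃ c, TotallyBelow a c ∧ TotallyBelow c b := by
  have hb : b ≤ sSup {x | ∃ c, TotallyBelow x c ∧ TotallyBelow c b} :=
    le_of_forall_totallyBelow_le fun c hc =>
      le_of_forall_totallyBelow_le fun x hx => le_sSup ⟨c, hx, hc⟩
  obtain ⟨x, ⟨c, hxc, hcb⟩, hax⟩ := h _ hb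
  exact ⟨c, hxc.mono_left hax, hcb⟩

theorem exists_totallyBelow_ne_bot {b : L} (hb : b ≠ ⊥) : ∃ c, TotallyBelow c b ∧ c ≠ ⊥ := by
  by_contra! H
  exact hb (le_bot_iff.1 ((le_sSup_setOf_totallyBelow b).trans_eq (sSup_eq_bot.2 H)))

theorem sup_le_of_forall_totallyBelow {a b z : L} (ha : a ≠ ⊥) (hb : b ≠ ⊥)
    (H : ∀ c d, TotallyBelow c a → TotallyBelow d b → c ≠ ⊥ → d ≠ ⊥ → c ⊔ d ≤ z) :
    a ⊔ b ≤ z := by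
  obtain ⟨c₀, hc₀a, hc₀⟩ := exists_totallyBelow_ne_bot ha
  obtain ⟨d₀, hd₀b, hd₀⟩ := exists_totallyBelow_ne_bot hb
  refine sup_le (le_of_forall_totallyBelow_le fun c hc => ?_)
    (le_of_forall_totallyBelow_le fun d hd => ?_)
  · rcases eq_or_ne c ⊥ with rfl | hc0
    · exact bot_le
    · exact le_sup_left.trans (H c d₀ hc hd₀b hc0 hd₀)
  · rcases eq_or_ne d ⊥ with rfl | hd0
    · exact bot_le
    · exact le_sup_right.trans (H c₀ d hc₀a hd hc₀ hd0)

end CompletelyDistrib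

section Hull

variable {𝒞 : Set (Set X)}

def hull (𝒞 : Set (Set X)) (Y : Set X) : Set X := ⋂₀ {K | K ∈ 𝒞 ∧ Y ⊆ K}

theorem hull_mem (h : IsConvex 𝒞) (Y : Set X) : hull 𝒞 Y ∈ 𝒞 :=
  h.2.2.1 _ fun _ hK => hK.1

theorem subset_hull (Y : Set X) : Y ⊆ hull 𝒞 Y :=
  fun _ hx => mem_sInter.2 fun _ hK => hK.2 hx

theorem hull_subset {K Y : Set X} (hK : K ∈ 𝒞) (hYK : Y ⊆ K) : hull 𝒞 Y ⊆ K :=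
  sInter_subset_of_mem ⟨hK, hYK⟩

end Hull

section Basic

variable [CompleteLattice L] {𝒞 : Set (Set X)} {a b e : L} {C D K : Set X}

noncomputable def basicMap (a : L) (C : Set X) : X → L := fun x => a ⊓ chiSet C x

@[simp]
theorem basicMap_apply_of_mem {x : X} (hx : x ∈ C) : basicMap a C x = a := by
  simp [basicMap, chiSet, hx]

@[simp]
theorem basicMap_apply_of_notMem {x : X} (hx : x ∉ C) : basicMap a C x = ⊥ := by
  simp [basicMap, chiSet, hx]

theorem basicMap_apply_le (x : X) : basicMap a C x ≤ a := inf_le_left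

theorem basicMap_univ (a : L) : basicMap a (univ : Set X) = fun _ => a := by
  funext x; simp

theorem mem_of_le_basicMap_apply {c : L} {x : X} (hc : c ≠ ⊥) (h : c ≤ basicMap e K x) : x ∈ K := by
  by_contra hx
  exact hc (le_bot_iff.1 (h.trans_eq (basicMap_apply_of_notMem hx)))

theorem basicMap_le_iff {A : X → L} : basicMap a C ≤ A ↔ ∀ x ∈ C, a ≤ A x := by
  refine ⟨fun h x hx => (basicMap_apply_of_mem hx).symm.trans_le (h x), fun h x => ?_⟩
  by_cases hx : x ∈ C
  · simpa [hx] using h x hx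
  · simp [hx]

theorem basicMap_mono (hab : a ≤ b) (hCD : C ⊆ D) : basicMap a C ≤ basicMap b D :=
  basicMap_le_iff.2 fun _ hx => hab.trans_eq (basicMap_apply_of_mem (hCD hx)).symm

theorem basicMap_ne_bot_iff : basicMap a C ≠ ⊥ ↔ a ≠ ⊥ ∧ C.Nonempty := by
  refine ⟨fun h => ⟨fun ha => h ?_, nonempty_iff_ne_empty.2 fun hC => h ?_⟩,
    fun ⟨ha, x, hx⟩ h => ?_⟩
  · funext x; simp [basicMap, ha]
  · funext x; simp [hC]
  · exact ha ((basicMap_apply_of_mem hx).symm.trans (congrFun h x))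

theorem basicMap_le_basicMap_iff (h : basicMap a C ≠ ⊥) :
    basicMap a C ≤ basicMap b D ↔ a ≤ b ∧ C ⊆ D := by
  obtain ⟨ha, x, hx⟩ := basicMap_ne_bot_iff.1 h
  refine ⟨fun hle => ⟨?_, fun y hy => ?_⟩, fun hle => basicMap_mono hle.1 hle.2⟩
  · exact ((basicMap_apply_of_mem hx).symm.trans_le (hle x)).trans (basicMap_apply_le x)
  · exact mem_of_le_basicMap_apply ha ((basicMap_apply_of_mem hy).symm.trans_le (hle y))

theorem iInf_basicMap {ι : Sort*} (a : ι → L) (C : ι → Set X) :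
    ⨅ i, basicMap (a i) (C i) = basicMap (⨅ i, a i) (⋂ i, C i) := by
  funext x
  by_cases hx : x ∈ ⋂ i, C i
  · simp [basicMap_apply_of_mem hx, basicMap_apply_of_mem (mem_iInter.1 hx _)]
  · obtain ⟨i, hi⟩ : ∃ i, x ∉ C i := by simpa using hx
    rw [basicMap_apply_of_notMem hx, iInf_apply]
    exact le_bot_iff.1 ((iInf_le _ i).trans_eq (basicMap_apply_of_notMem hi))

theorem basicMap_mem_omegaBase (hC : C ∈ 𝒞) : basicMap a C ∈ omegaBase L 𝒞 := ⟨a, C, hC, rfl⟩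

theorem iInf_mem_omegaBase (h : IsConvex 𝒞) {ι : Sort*} {f : ι → X → L}
    (hf : ∀ i, f i ∈ omegaBase L 𝒞) : ⨅ i, f i ∈ omegaBase L 𝒞 := by
  choose a C hC hfC using hf
  obtain rfl : f = fun i => basicMap (a i) (C i) := funext hfC
  rw [iInf_basicMap, ← sInter_range]
  exact basicMap_mem_omegaBase (h.2.2.1 _ (range_subset_iff.2 hC))

theorem omegaBase_subset_omegaL : omegaBase L 𝒞 ⊆ omegaL L 𝒞 :=
  fun f hf => ⟨{f}, singleton_subset_iff.2 hf, directedOn_singleton f, sSup_singleton.symm⟩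

end Basic

section Approximation

variable [CompleteLattice L] {𝒞 : Set (Set X)} {A B : X → L}

def basicsBelow (𝒞 : Set (Set X)) (A : X → L) : Set (X → L) := {f ∈ omegaBase L 𝒞 | f ≤ A}

def IsApproximatedByBasics (𝒞 : Set (Set X)) (A : X → L) : Prop :=
  DirectedOn (· ≤ ·) (basicsBelow 𝒞 A) ∧ sSup (basicsBelow 𝒞 A) = A

def HullSupClosed (𝒞 : Set (Set X)) (A : X → L) : Prop :=
  ∀ ⦃a b : L⦄ ⦃C D : Set X⦄, C ∈ 𝒞 → D ∈ 𝒞 → basicMap a C ≠ ⊥ → basicMap b D ≠ ⊥ →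
    basicMap a C ≤ A → basicMap b D ≤ A → basicMap (a ⊔ b) (hull 𝒞 (C ∪ D)) ≤ A

theorem basicsBelow_mono (hAB : A ≤ B) : basicsBelow 𝒞 A ⊆ basicsBelow 𝒞 B :=
  fun _ hf => ⟨hf.1, hf.2.trans hAB⟩

theorem sSup_basicsBelow_le : sSup (basicsBelow 𝒞 A) ≤ A := sSup_le fun _ hf => hf.2

theorem directedOn_basicsBelow_iff (h : IsConvex 𝒞) :
    DirectedOn (· ≤ ·) (basicsBelow 𝒞 A) ↔ HullSupClosed 𝒞 A := by
  refine ⟨fun hA a b C D _ _ hCa hDb hCA hDA => ?_, fun hA f hf g hg => ?_⟩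
  · obtain ⟨_, ⟨⟨e, K, hK, rfl⟩, hKA⟩, hCK, hDK⟩ :=
      hA _ ⟨basicMap_mem_omegaBase ‹C ∈ 𝒞›, hCA⟩ _ ⟨basicMap_mem_omegaBase ‹D ∈ 𝒞›, hDA⟩
    obtain ⟨hae, hCK⟩ := (basicMap_le_basicMap_iff hCa).1 hCK
    obtain ⟨hbe, hDK⟩ := (basicMap_le_basicMap_iff hDb).1 hDK
    exact (basicMap_mono (sup_le hae hbe) (hull_subset hK (union_subset hCK hDK))).trans hKA
  · obtain ⟨⟨a, C, hC, rfl⟩, hCA⟩ := hf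
    obtain ⟨⟨b, D, hD, rfl⟩, hDA⟩ := hg
    by_cases hCa : basicMap a C = ⊥
    · exact ⟨basicMap b D, ⟨basicMap_mem_omegaBase hD, hDA⟩, hCa.le.trans bot_le, le_rfl⟩
    by_cases hDb : basicMap b D = ⊥
    · exact ⟨basicMap a C, ⟨basicMap_mem_omegaBase hC, hCA⟩, le_rfl, hDb.le.trans bot_le⟩
    exact ⟨_, ⟨basicMap_mem_omegaBase (hull_mem h _), hA hC hD hCa hDb hCA hDA⟩,
      basicMap_mono le_sup_left (subset_union_left.trans (subset_hull _)),
      basicMap_mono le_sup_right (subset_union_right.trans (subset_hull _))⟩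

theorem isApproximatedByBasics_of_mem_omegaBase (hA : A ∈ omegaBase L 𝒞) :
    IsApproximatedByBasics 𝒞 A :=
  ⟨fun _ hf _ hg => ⟨A, ⟨hA, le_rfl⟩, hf.2, hg.2⟩,
    le_antisymm sSup_basicsBelow_le (le_sSup ⟨hA, le_rfl⟩)⟩

end Approximation

section Closure

variable [CompletelyDistribLattice L] {𝒞 : Set (Set X)} {S : Set (X → L)}

theorem isApproximatedByBasics_sInf (h : IsConvex 𝒞)
    (hS : ∀ A ∈ S, IsApproximatedByBasics 𝒞 A) : IsApproximatedByBasics 𝒞 (sInf S) := by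
  have hS' : ∀ A ∈ S, HullSupClosed 𝒞 A := fun A hA => (directedOn_basicsBelow_iff h).1 (hS A hA).1
  refine ⟨(directedOn_basicsBelow_iff h).2 fun a b C D hC hD hCa hDb hCA hDA =>
    le_sInf fun A hA => hS' A hA hC hD hCa hDb (hCA.trans (sInf_le hA)) (hDA.trans (sInf_le hA)),
    le_antisymm sSup_basicsBelow_le ?_⟩
  calc sInf S = ⨅ A : S, ⨆ f : basicsBelow 𝒞 A.1, (f : X → L) := by
        rw [sInf_eq_iInf']
        exact iInf_congr fun A => ((hS A A.2).2.symm.trans (sSup_eq_iSup' _))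
    _ = ⨆ g : ∀ A : S, basicsBelow 𝒞 A.1, ⨅ A, (g A : X → L) := iInf_iSup_eq
    _ ≤ sSup (basicsBelow 𝒞 (sInf S)) := iSup_le fun g => le_sSup
        ⟨iInf_mem_omegaBase h fun A => (g A).2.1,
          le_sInf fun A hA => (iInf_le _ ⟨A, hA⟩).trans (g ⟨A, hA⟩).2.2⟩

theorem exists_mem_basicMap_le_of_totallyBelow (hdir : DirectedOn (· ≤ ·) S)
    (hS : ∀ A ∈ S, IsApproximatedByBasics 𝒞 A) {c d : L} {x y : X} (hc0 : c ≠ ⊥)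
    (hc : TotallyBelow c (sSup S x)) (hd : TotallyBelow d (sSup S y)) :
    ∃ A ∈ S, ∃ K ∈ 𝒞, x ∈ K ∧ basicMap (c ⊔ d) K ≤ A := by
  -- interpolating lets total-belowness be used twice:
  -- to pick a member of `S`, then a basic map below it
  obtain ⟨c', hcc', hc'⟩ := hc.exists_interpolate
  obtain ⟨d', hdd', hd'⟩ := hd.exists_interpolate
  obtain ⟨A, hA, hc'A, hd'A⟩ := hdir.exists_le_apply_of_totallyBelow hc' hd'
  have hAx : ∀ z, A z = sSup (basicsBelow 𝒞 A) z := fun z => congrFun (hS A hA).2.symm z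
  obtain ⟨_, ⟨⟨e, K, hK, rfl⟩, hKA⟩, hcK, hdK⟩ :=
    (hS A hA).1.exists_le_apply_of_totallyBelow (hcc'.mono_right (hc'A.trans_eq (hAx x)))
      (hdd'.mono_right (hd'A.trans_eq (hAx y)))
  refine ⟨A, hA, K, hK, mem_of_le_basicMap_apply hc0 hcK, (basicMap_mono ?_ subset_rfl).trans hKA⟩
  exact sup_le (hcK.trans (basicMap_apply_le x)) (hdK.trans (basicMap_apply_le y))

theorem directedOn_setOf_basicMap_le_mem (h : IsConvex 𝒞) (hdir : DirectedOn (· ≤ ·) S)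
    (hS : ∀ A ∈ S, HullSupClosed 𝒞 A) {e : L} (he : e ≠ ⊥) :
    DirectedOn (· ⊆ ·) {K ∈ 𝒞 | ∃ A ∈ S, basicMap e K ≤ A} := by
  rintro K ⟨hK, A, hA, hKA⟩ K' ⟨hK', A', hA', hK'A'⟩
  rcases K.eq_empty_or_nonempty with rfl | hKne
  · exact ⟨K', ⟨hK', A', hA', hK'A'⟩, empty_subset _, subset_rfl⟩
  rcases K'.eq_empty_or_nonempty with rfl | hK'ne
  · exact ⟨K, ⟨hK, A, hA, hKA⟩, subset_rfl, empty_subset _⟩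
  obtain ⟨E, hE, hAE, hA'E⟩ := hdir A hA A' hA'
  have hjoin := hS E hE hK hK' (basicMap_ne_bot_iff.2 ⟨he, hKne⟩)
    (basicMap_ne_bot_iff.2 ⟨he, hK'ne⟩) (hKA.trans hAE) (hK'A'.trans hA'E)
  rw [sup_idem] at hjoin
  exact ⟨hull 𝒞 (K ∪ K'), ⟨hull_mem h _, E, hE, hjoin⟩,
    subset_union_left.trans (subset_hull _), subset_union_right.trans (subset_hull _)⟩

theorem exists_convex_superset_basicMap_le_sSup (h : IsConvex 𝒞) (hdir : DirectedOn (· ≤ ·) S)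
    (hS : ∀ A ∈ S, IsApproximatedByBasics 𝒞 A) {c d : L} {C D : Set X} (hc0 : c ≠ ⊥)
    (hd0 : d ≠ ⊥) (hC : ∀ x ∈ C, TotallyBelow c (sSup S x))
    (hD : ∀ y ∈ D, TotallyBelow d (sSup S y)) (hCne : C.Nonempty) (hDne : D.Nonempty) :
    ∃ U ∈ 𝒞, C ∪ D ⊆ U ∧ basicMap (c ⊔ d) U ≤ sSup S := by
  have hS' : ∀ A ∈ S, HullSupClosed 𝒞 A := fun A hA => (directedOn_basicsBelow_iff h).1 (hS A hA).1
  obtain ⟨x₀, hx₀⟩ := hCne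
  obtain ⟨y₀, hy₀⟩ := hDne
  refine ⟨⋃₀ {K ∈ 𝒞 | ∃ A ∈ S, basicMap (c ⊔ d) K ≤ A},
    h.2.2.2 _ (fun _ hK => hK.1)
      (directedOn_setOf_basicMap_le_mem h hdir hS' (ne_bot_of_le_ne_bot hc0 le_sup_left)), ?_, ?_⟩
  · rintro x (hx | hx)
    · obtain ⟨A, hA, K, hK, hxK, hKA⟩ :=
        exists_mem_basicMap_le_of_totallyBelow hdir hS hc0 (hC x hx) (hD y₀ hy₀)
      exact ⟨K, ⟨hK, A, hA, hKA⟩, hxK⟩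
    · obtain ⟨A, hA, K, hK, hxK, hKA⟩ :=
        exists_mem_basicMap_le_of_totallyBelow hdir hS hd0 (hD x hx) (hC x₀ hx₀)
      exact ⟨K, ⟨hK, A, hA, sup_comm c d ▸ hKA⟩, hxK⟩
  · rw [basicMap_le_iff]
    rintro x ⟨K, ⟨-, A, hA, hKA⟩, hxK⟩
    exact (basicMap_le_iff.1 hKA x hxK).trans (le_sSup hA x)

theorem hullSupClosed_sSup (h : IsConvex 𝒞) (hdir : DirectedOn (· ≤ ·) S)
    (hS : ∀ A ∈ S, IsApproximatedByBasics 𝒞 A) : HullSupClosed 𝒞 (sSup S) := by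
  intro a b C D _ _ hCa hDb hCS hDS
  obtain ⟨ha, hCne⟩ := basicMap_ne_bot_iff.1 hCa
  obtain ⟨hb, hDne⟩ := basicMap_ne_bot_iff.1 hDb
  refine basicMap_le_iff.2 fun x hx =>
    sup_le_of_forall_totallyBelow ha hb fun c d hc hd hc0 hd0 => ?_
  obtain ⟨U, hU, hCDU, hUS⟩ := exists_convex_superset_basicMap_le_sSup h hdir hS hc0 hd0
    (fun x hx => hc.mono_right (basicMap_le_iff.1 hCS x hx))
    (fun y hy => hd.mono_right (basicMap_le_iff.1 hDS y hy)) hCne hDne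
  exact basicMap_le_iff.1 hUS x (hull_subset hU hCDU hx)

theorem isApproximatedByBasics_sSup (h : IsConvex 𝒞) (hdir : DirectedOn (· ≤ ·) S)
    (hS : ∀ A ∈ S, IsApproximatedByBasics 𝒞 A) : IsApproximatedByBasics 𝒞 (sSup S) :=
  ⟨(directedOn_basicsBelow_iff h).2 (hullSupClosed_sSup h hdir hS),
    le_antisymm sSup_basicsBelow_le <| sSup_le fun A hA =>
      (hS A hA).2.ge.trans (sSup_le_sSup (basicsBelow_mono (le_sSup hA)))⟩

theorem mem_omegaL_iff (h : IsConvex 𝒞) {A : X → L} :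
    A ∈ omegaL L 𝒞 ↔ IsApproximatedByBasics 𝒞 A := by
  refine ⟨?_, fun hA => ⟨basicsBelow 𝒞 A, fun _ hf => hf.1, hA.1, hA.2.symm⟩⟩
  rintro ⟨T, hT, hdir, rfl⟩
  exact isApproximatedByBasics_sSup h hdir fun A hA =>
    isApproximatedByBasics_of_mem_omegaBase (hT hA)

end Closure

theorem omegaL_stratified_lconvex [CompletelyDistribLattice L]
    (𝒞 : Set (Set X)) (h : IsConvex 𝒞) :
    IsLConvex (omegaL L 𝒞) ∧ IsStratified (omegaL L 𝒞) := by
  have hconst : IsStratified (omegaL L 𝒞) := fun a =>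
    basicMap_univ (X := X) a ▸ omegaBase_subset_omegaL (basicMap_mem_omegaBase h.2.1)
  refine ⟨⟨hconst ⊤, hconst ⊥, fun S hS => ?_, fun S hS hdir => ?_⟩, hconst⟩
  · exact (mem_omegaL_iff h).2 <|
      isApproximatedByBasics_sInf h fun A hA => (mem_omegaL_iff h).1 (hS hA)
  · exact (mem_omegaL_iff h).2 <|
      isApproximatedByBasics_sSup h hdir fun A hA => (mem_omegaL_iff h).1 (hS hA)
end
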